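/- Assume (cond1) and (cond2) with |U| = 1, ρ ≥ 1 and A₁ ≥ 1, and suppose v ∈ C^{2,α}(ℝ^d) satisfies ρ‖v‖_∞ ≤ A₁, ρ^{1−α/2}[v]_{0,α} ≤ A₁, ρ^{1/2−α/2}[v]_{1,α} ≤ A₁, ρ^{−α/2}[v]_{2,α} ≤ A₁, ρ^{1/2}⟦v⟧₁ ≤ A₁ and ⟦v⟧₂ ≤ A₁. Define π(x,u) := Γ(x, Dv(x), D²v(x))(u). Then there exists a constant C depending only on λ and C₀ (and d, α) such that for every u ∈ U: ‖π(·,u)‖_∞ ≤ exp[C(1 + A₁(ρ^{−1/2} + ε₀))] and [π(·,u)]_{0,α} ≤ (1 + A₁(ρ^{α/2−1/2} + ε₁ + ρ^{α/2}ε₀)) · exp[C(1 + A₁(ρ^{−1/2} + ε₀))]. -/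

import Mathlib

open MeasureTheory Real Metric
noncomputable section

/-- First-order partial derivative `∂v/∂xᵢ`. -/
def pd1 (d : ℕ) (v : EuclideanSpace ℝ (Fin d) → ℝ) (x : EuclideanSpace ℝ (Fin d))
    (i : Fin d) : ℝ :=
  fderiv ℝ v x (EuclideanSpace.single i 1)

/-- Second-order partial derivative `∂²v/∂xᵢ∂xⱼ`. -/
def pd2 (d : ℕ) (v : EuclideanSpace ℝ (Fin d) → ℝ) (x : EuclideanSpace ℝ (Fin d))
    (i j : Fin d) : ℝ :=
  fderiv ℝ (fun y => fderiv ℝ v y (EuclideanSpace.single j 1)) x (EuclideanSpace.single i 1)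

/-- The exponent `(1/λ)(r(x,u) + b(x,u)·p + (1/2) tr(Σ(x,u) X))` of the Gibbs density. -/
def gibbsExponent (d l : ℕ) (lam : ℝ)
    (r : EuclideanSpace ℝ (Fin d) → EuclideanSpace ℝ (Fin l) → ℝ)
    (b : EuclideanSpace ℝ (Fin d) → EuclideanSpace ℝ (Fin l) → Fin d → ℝ)
    (S : EuclideanSpace ℝ (Fin d) → EuclideanSpace ℝ (Fin l) → Matrix (Fin d) (Fin d) ℝ)
    (x : EuclideanSpace ℝ (Fin d)) (p : Fin d → ℝ) (X : Matrix (Fin d) (Fin d) ℝ)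
    (u : EuclideanSpace ℝ (Fin l)) : ℝ :=
  (1 / lam) * (r x u + ∑ i, b x u i * p i + (1 / 2) * ∑ i, ∑ j, S x u i j * X j i)

/-- The Gibbs density `Γ(x,p,X)(u)`. -/
def gibbsDensity (d l : ℕ) (lam : ℝ) (U : Set (EuclideanSpace ℝ (Fin l)))
    (r : EuclideanSpace ℝ (Fin d) → EuclideanSpace ℝ (Fin l) → ℝ)
    (b : EuclideanSpace ℝ (Fin d) → EuclideanSpace ℝ (Fin l) → Fin d → ℝ)
    (S : EuclideanSpace ℝ (Fin d) → EuclideanSpace ℝ (Fin l) → Matrix (Fin d) (Fin d) ℝ)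
    (x : EuclideanSpace ℝ (Fin d)) (p : Fin d → ℝ) (X : Matrix (Fin d) (Fin d) ℝ)
    (u : EuclideanSpace ℝ (Fin l)) : ℝ :=
  Real.exp (gibbsExponent d l lam r b S x p X u) /
    ∫ u' in U, Real.exp (gibbsExponent d l lam r b S x p X u')

/-- The Hessian matrix of `v` at `x`. -/
def hessian (d : ℕ) (v : EuclideanSpace ℝ (Fin d) → ℝ) (x : EuclideanSpace ℝ (Fin d)) :
    Matrix (Fin d) (Fin d) ℝ :=
  Matrix.of fun i j => pd2 d v x i j

/-- The policy `π(x,·) = Γ(x, Dv(x), D²v(x))` obtained from a value function `v`. -/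
def gibbsPolicy (d l : ℕ) (lam : ℝ) (U : Set (EuclideanSpace ℝ (Fin l)))
    (r : EuclideanSpace ℝ (Fin d) → EuclideanSpace ℝ (Fin l) → ℝ)
    (b : EuclideanSpace ℝ (Fin d) → EuclideanSpace ℝ (Fin l) → Fin d → ℝ)
    (S : EuclideanSpace ℝ (Fin d) → EuclideanSpace ℝ (Fin l) → Matrix (Fin d) (Fin d) ℝ)
    (v : EuclideanSpace ℝ (Fin d) → ℝ)
    (x : EuclideanSpace ℝ (Fin d)) (u : EuclideanSpace ℝ (Fin l)) : ℝ :=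
  gibbsDensity d l lam U r b S x (fun i => pd1 d v x i) (hessian d v x) u


private lemma sumAbsLe {d : ℕ} (f : Fin d → ℝ) (c : ℝ) (h : ∀ i, |f i| ≤ c) :
    |∑ i, f i| ≤ d * c := by
  calc |∑ i, f i| ≤ ∑ i, |f i| := Finset.abs_sum_le_sum_abs _ _
    _ ≤ ∑ _i : Fin d, c := Finset.sum_le_sum fun i _ => h i
    _ = d * c := by simp [Finset.sum_const, nsmul_eq_mul]

private lemma expDiffLe {a b B : ℝ} (ha : |a| ≤ B) (hb : |b| ≤ B) :
    |Real.exp a - Real.exp b| ≤ Real.exp B * |a - b| := by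
  wlog h : b ≤ a generalizing a b
  · rw [abs_sub_comm, abs_sub_comm a b]; exact this hb ha (le_of_not_ge h)
  have h2 : Real.exp b ≤ Real.exp a := Real.exp_le_exp.2 h
  have h1 : Real.exp a ≤ Real.exp B := Real.exp_le_exp.2 ((le_abs_self a).trans ha)
  rw [abs_of_nonneg (sub_nonneg.2 h2), abs_of_nonneg (sub_nonneg.2 h)]
  have h3 : (-(a - b)) + 1 ≤ Real.exp (-(a - b)) := Real.add_one_le_exp (-(a-b))
  have h5 : Real.exp b = Real.exp a * Real.exp (-(a - b)) := by
    rw [← Real.exp_add]; congr 1; ring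
  nlinarith [Real.exp_pos a, Real.exp_pos (a - b)]

private lemma gibbsInt {l : ℕ} {U : Set (EuclideanSpace ℝ (Fin l))} (hU : MeasurableSet U)
    (hvol : volume U = 1) {f : EuclideanSpace ℝ (Fin l) → ℝ} (hf : Measurable f)
    {B : ℝ} (hB : ∀ u ∈ U, |f u| ≤ B) :
    IntegrableOn (fun w => Real.exp (f w)) U volume ∧
      Real.exp (-B) ≤ (∫ w in U, Real.exp (f w)) ∧
      (∫ w in U, Real.exp (f w)) ≤ Real.exp B := by
  haveI hfin : IsFiniteMeasure (volume.restrict U) :=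
    ⟨by rw [Measure.restrict_apply_univ, hvol]; exact ENNReal.one_lt_top⟩
  have hint : IntegrableOn (fun w => Real.exp (f w)) U volume := by
    refine Integrable.mono' (integrable_const (Real.exp B)) hf.exp.aestronglyMeasurable ?_
    filter_upwards [ae_restrict_mem hU] with w hw
    rw [Real.norm_eq_abs, abs_of_pos (Real.exp_pos _)]
    exact Real.exp_le_exp.2 ((le_abs_self _).trans (hB w hw))
  have hconst : ∀ c : ℝ, (∫ _ in U, c ∂(volume)) = c := by
    intro c; rw [setIntegral_const, measureReal_def, hvol]; simp
  refine ⟨hint, ?_, ?_⟩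
  · rw [← hconst (Real.exp (-B))]
    exact setIntegral_mono_on (integrable_const _) hint hU fun w hw =>
      Real.exp_le_exp.2 (neg_le_of_abs_le (hB w hw))
  · rw [← hconst (Real.exp B)]
    exact setIntegral_mono_on hint (integrable_const _) hU fun w hw =>
      Real.exp_le_exp.2 ((le_abs_self _).trans (hB w hw))

set_option maxHeartbeats 1000000 in
/-- Lemma 2.3 (first part): sup-norm and Hölder bounds for the Gibbs policy
`π(x,u) = Γ(x, Dv(x), D²v(x))(u)` under (cond1), (cond2), `|U| = 1`, `ρ ≥ 1`, `A₁ ≥ 1`,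
for `v` satisfying the estimates of Lemma 2.1 with constant `A₁`. -/
theorem stmt2 (d l : ℕ) (α lam C₀ : ℝ)
    (hα0 : 0 < α) (hα1 : α < 1) (hlam : 0 < lam) (hC₀ : 1 ≤ C₀) :
    ∃ C : ℝ, 0 < C ∧
    ∀ (U : Set (EuclideanSpace ℝ (Fin l)))
      (r : EuclideanSpace ℝ (Fin d) → EuclideanSpace ℝ (Fin l) → ℝ)
      (b : EuclideanSpace ℝ (Fin d) → EuclideanSpace ℝ (Fin l) → Fin d → ℝ)
      (S : EuclideanSpace ℝ (Fin d) → EuclideanSpace ℝ (Fin l) → Matrix (Fin d) (Fin d) ℝ)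
      (S0 : EuclideanSpace ℝ (Fin d) → Matrix (Fin d) (Fin d) ℝ)
      (ε₀ ε₁ ρ A₁ : ℝ)
      (v : EuclideanSpace ℝ (Fin d) → ℝ),
      MeasurableSet U → Bornology.IsBounded U → volume U = 1 →
      -- measurability in the control variable
      (∀ x, Measurable fun u => r x u) →
      (∀ x i, Measurable fun u => b x u i) →
      (∀ x i j, Measurable fun u => S x u i j) →
      -- (cond1)
      (∀ u ∈ U, ∀ x (ξ : Fin d → ℝ),
        (1 / C₀) * ∑ i, ξ i ^ 2 ≤ ∑ i, ∑ j, ξ i * S x u i j * ξ j) →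
      (∀ u ∈ U, ∀ x, |r x u| ≤ C₀) →
      (∀ u ∈ U, ∀ x y, dist x y ≤ 1 → |r x u - r y u| ≤ C₀ * dist x y ^ α) →
      (∀ u ∈ U, ∀ x i, |b x u i| ≤ C₀) →
      (∀ u ∈ U, ∀ x y, dist x y ≤ 1 → ∀ i, |b x u i - b y u i| ≤ C₀ * dist x y ^ α) →
      (∀ u ∈ U, ∀ x i j, |S x u i j| ≤ C₀) →
      (∀ u ∈ U, ∀ x y, dist x y ≤ 1 → ∀ i j, |S x u i j - S y u i j| ≤ C₀ * dist x y ^ α) →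
      -- (cond2)
      0 < ε₀ → ε₀ < 1 → 0 < ε₁ → ε₁ < 1 →
      (∀ u ∈ U, ∀ x i j, |S x u i j - S0 x i j| ≤ ε₀) →
      (∀ u ∈ U, ∀ x y, dist x y ≤ 1 → ∀ i j,
        |(S x u i j - S0 x i j) - (S y u i j - S0 y i j)| ≤ ε₁ * dist x y ^ α) →
      -- ρ ≥ 1, A₁ ≥ 1
      1 ≤ ρ → 1 ≤ A₁ →
      -- v ∈ C^{2,α} with the estimates of Lemma 2.1 (constant A₁)
      ContDiff ℝ 2 v →
      (∀ x, ρ * |v x| ≤ A₁) →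
      (∀ x y, dist x y ≤ 1 → ρ ^ (1 - α/2) * |v x - v y| ≤ A₁ * dist x y ^ α) →
      (∀ x y, dist x y ≤ 1 →
        ρ ^ (1/2 - α/2) * ‖fderiv ℝ v x - fderiv ℝ v y‖ ≤ A₁ * dist x y ^ α) →
      (∀ x y, dist x y ≤ 1 →
        ρ ^ (-α/2) * ‖iteratedFDeriv ℝ 2 v x - iteratedFDeriv ℝ 2 v y‖ ≤ A₁ * dist x y ^ α) →
      (∀ x, ρ ^ ((1:ℝ)/2) * ‖fderiv ℝ v x‖ ≤ A₁) →
      (∀ x, ‖iteratedFDeriv ℝ 2 v x‖ ≤ A₁) →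
      -- conclusions
      ∀ u ∈ U,
        (∀ x, |gibbsPolicy d l lam U r b S v x u| ≤
          Real.exp (C * (1 + A₁ * (ρ ^ (-(1:ℝ)/2) + ε₀)))) ∧
        (∀ x y, dist x y ≤ 1 →
          |gibbsPolicy d l lam U r b S v x u - gibbsPolicy d l lam U r b S v y u| ≤
            (1 + A₁ * (ρ ^ (α/2 - 1/2) + ε₁ + ρ ^ (α/2) * ε₀)) *
              Real.exp (C * (1 + A₁ * (ρ ^ (-(1:ℝ)/2) + ε₀))) * dist x y ^ α) := by
  classical
  have h0C : (0:ℝ) < C₀ := lt_of_lt_of_le one_pos hC₀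
  set c1 : ℝ := (C₀ * (1 + 2 * d) + (d:ℝ)^2) / lam + 1 with hc1def
  have hd0 : (0:ℝ) ≤ (d:ℝ) := Nat.cast_nonneg d
  have hc1pos : 0 < c1 := by
    have h1 : (0:ℝ) ≤ C₀ * (1 + 2 * d) := mul_nonneg h0C.le (by positivity)
    have h2 : (0:ℝ) ≤ (C₀ * (1 + 2 * d) + (d:ℝ)^2) / lam := by
      apply div_nonneg _ hlam.le; positivity
    rw [hc1def]; linarith
  refine ⟨6 * c1 + 1, by linarith, ?_⟩
  intro U r b S S0 ε₀ ε₁ ρ A₁ v hU hUbdd hvol hmr hmb hmS hell hrB hrH hbB hbH hSB hSH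
    hε₀ hε₀1 hε₁ hε₁1 hM0 hM1 hρ hA₁ hv hv0 hv0H hv1H hv2H hv1 hv2
  have hρ0 : (0:ℝ) < ρ := lt_of_lt_of_le one_pos hρ
  have hA0 : (0:ℝ) < A₁ := lt_of_lt_of_le one_pos hA₁
  set s : ℝ := ρ ^ (-(1:ℝ)/2) with hs
  set t1 : ℝ := ρ ^ (α/2 - 1/2) with ht1
  set t2 : ℝ := ρ ^ (α/2) with ht2
  have hs0 : 0 < s := Real.rpow_pos_of_pos hρ0 _
  have ht10 : 0 < t1 := Real.rpow_pos_of_pos hρ0 _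
  have ht20 : 0 < t2 := Real.rpow_pos_of_pos hρ0 _
  have hst : s ≤ t1 := Real.rpow_le_rpow_of_exponent_le hρ (by linarith)
  have hkey1 : s * ρ ^ ((1:ℝ)/2) = 1 := by
    rw [hs, ← Real.rpow_add hρ0, show (-(1:ℝ)/2) + (1:ℝ)/2 = 0 by ring, Real.rpow_zero]
  have hkey2 : t1 * ρ ^ ((1:ℝ)/2 - α/2) = 1 := by
    rw [ht1, ← Real.rpow_add hρ0, show (α/2 - 1/2) + ((1:ℝ)/2 - α/2) = 0 by ring,
      Real.rpow_zero]
  have hkey3 : t2 * ρ ^ (-α/2) = 1 := by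
    rw [ht2, ← Real.rpow_add hρ0, show (α/2) + (-α/2) = 0 by ring, Real.rpow_zero]
  -- derived gradient/Hessian bounds
  have hgrad : ∀ x, ‖fderiv ℝ v x‖ ≤ A₁ * s := by
    intro x
    calc ‖fderiv ℝ v x‖ = s * (ρ ^ ((1:ℝ)/2) * ‖fderiv ℝ v x‖) := by
          rw [← mul_assoc, hkey1, one_mul]
      _ ≤ s * A₁ := mul_le_mul_of_nonneg_left (hv1 x) hs0.le
      _ = A₁ * s := mul_comm _ _
  have hgradH : ∀ x y, dist x y ≤ 1 →
      ‖fderiv ℝ v x - fderiv ℝ v y‖ ≤ A₁ * t1 * dist x y ^ α := by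
    intro x y hxy
    calc ‖fderiv ℝ v x - fderiv ℝ v y‖
        = t1 * (ρ ^ ((1:ℝ)/2 - α/2) * ‖fderiv ℝ v x - fderiv ℝ v y‖) := by
          rw [← mul_assoc, hkey2, one_mul]
      _ ≤ t1 * (A₁ * dist x y ^ α) := mul_le_mul_of_nonneg_left (hv1H x y hxy) ht10.le
      _ = A₁ * t1 * dist x y ^ α := by ring
  have hhessH : ∀ x y, dist x y ≤ 1 →
      ‖iteratedFDeriv ℝ 2 v x - iteratedFDeriv ℝ 2 v y‖ ≤ A₁ * t2 * dist x y ^ α := by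
    intro x y hxy
    calc ‖iteratedFDeriv ℝ 2 v x - iteratedFDeriv ℝ 2 v y‖
        = t2 * (ρ ^ (-α/2) * ‖iteratedFDeriv ℝ 2 v x - iteratedFDeriv ℝ 2 v y‖) := by
          rw [← mul_assoc, hkey3, one_mul]
      _ ≤ t2 * (A₁ * dist x y ^ α) := mul_le_mul_of_nonneg_left (hv2H x y hxy) ht20.le
      _ = A₁ * t2 * dist x y ^ α := by ring
  have hnorme : ∀ i : Fin d,
      ‖(EuclideanSpace.single i (1:ℝ) : EuclideanSpace ℝ (Fin d))‖ = 1 := by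
    intro i; rw [EuclideanSpace.norm_single]; norm_num
  have hp1 : ∀ x i, |pd1 d v x i| ≤ A₁ * s := by
    intro x i
    calc |pd1 d v x i| = ‖fderiv ℝ v x (EuclideanSpace.single i 1)‖ := by
          simp only [pd1]; rw [Real.norm_eq_abs]
      _ ≤ ‖fderiv ℝ v x‖ * ‖(EuclideanSpace.single i (1:ℝ) : EuclideanSpace ℝ (Fin d))‖ :=
          ContinuousLinearMap.le_opNorm _ _
      _ = ‖fderiv ℝ v x‖ := by rw [hnorme, mul_one]
      _ ≤ A₁ * s := hgrad x
  have hp1d : ∀ x y, dist x y ≤ 1 → ∀ i,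
      |pd1 d v x i - pd1 d v y i| ≤ A₁ * t1 * dist x y ^ α := by
    intro x y hxy i
    have heq : pd1 d v x i - pd1 d v y i
        = (fderiv ℝ v x - fderiv ℝ v y) (EuclideanSpace.single i 1) := by
      simp [pd1, ContinuousLinearMap.sub_apply]
    rw [heq, ← Real.norm_eq_abs]
    calc ‖(fderiv ℝ v x - fderiv ℝ v y) (EuclideanSpace.single i 1)‖
        ≤ ‖fderiv ℝ v x - fderiv ℝ v y‖ *
            ‖(EuclideanSpace.single i (1:ℝ) : EuclideanSpace ℝ (Fin d))‖ :=
          ContinuousLinearMap.le_opNorm _ _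
      _ = ‖fderiv ℝ v x - fderiv ℝ v y‖ := by rw [hnorme, mul_one]
      _ ≤ A₁ * t1 * dist x y ^ α := hgradH x y hxy
  have hdv : Differentiable ℝ (fderiv ℝ v) :=
    (hv.fderiv_right (m := 1) (by norm_num)).differentiable (by norm_num)
  have hpd2eq : ∀ x i j, pd2 d v x i j =
      iteratedFDeriv ℝ 2 v x ![EuclideanSpace.single i 1, EuclideanSpace.single j 1] := by
    intro x i j
    rw [iteratedFDeriv_two_apply]
    simp only [Matrix.cons_val_zero, Matrix.cons_val_one, Matrix.head_cons]
    simp only [pd2]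
    rw [fderiv_clm_apply (hdv x) (differentiableAt_const _)]
    simp
  have hp2 : ∀ x i j, |pd2 d v x i j| ≤ A₁ := by
    intro x i j
    rw [hpd2eq, ← Real.norm_eq_abs]
    have h := (iteratedFDeriv ℝ 2 v x).le_opNorm
      ![EuclideanSpace.single i 1, EuclideanSpace.single j 1]
    rw [Fin.prod_univ_two] at h
    simp only [Matrix.cons_val_zero, Matrix.cons_val_one, Matrix.head_cons] at h
    rw [hnorme, hnorme, mul_one, mul_one] at h
    exact h.trans (hv2 x)
  have hp2d : ∀ x y, dist x y ≤ 1 → ∀ i j,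
      |pd2 d v x i j - pd2 d v y i j| ≤ A₁ * t2 * dist x y ^ α := by
    intro x y hxy i j
    rw [hpd2eq, hpd2eq]
    have heq : iteratedFDeriv ℝ 2 v x ![EuclideanSpace.single i 1, EuclideanSpace.single j 1]
        - iteratedFDeriv ℝ 2 v y ![EuclideanSpace.single i 1, EuclideanSpace.single j 1]
        = (iteratedFDeriv ℝ 2 v x - iteratedFDeriv ℝ 2 v y)
            ![EuclideanSpace.single i 1, EuclideanSpace.single j 1] := by
      simp [ContinuousMultilinearMap.sub_apply]
    rw [heq, ← Real.norm_eq_abs]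
    have h := (iteratedFDeriv ℝ 2 v x - iteratedFDeriv ℝ 2 v y).le_opNorm
      ![EuclideanSpace.single i 1, EuclideanSpace.single j 1]
    rw [Fin.prod_univ_two] at h
    simp only [Matrix.cons_val_zero, Matrix.cons_val_one, Matrix.head_cons] at h
    rw [hnorme, hnorme, mul_one, mul_one] at h
    exact h.trans (hhessH x y hxy)
  -- split the exponent
  set F : EuclideanSpace ℝ (Fin d) → EuclideanSpace ℝ (Fin l) → ℝ := fun x w =>
    (1/lam) * (r x w + ∑ i, b x w i * pd1 d v x i +
      (1/2) * ∑ i, ∑ j, (S x w i j - S0 x i j) * pd2 d v x j i) with hF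
  set G : EuclideanSpace ℝ (Fin d) → ℝ := fun x =>
    (1/lam) * ((1/2) * ∑ i, ∑ j, S0 x i j * pd2 d v x j i) with hG
  have hEFG : ∀ x w, gibbsExponent d l lam r b S x (fun i => pd1 d v x i) (hessian d v x) w
      = F x w + G x := by
    intro x w
    simp only [gibbsExponent, hessian, Matrix.of_apply, hF, hG]
    have hsplit : ∀ i : Fin d, ∀ j : Fin d, S x w i j * pd2 d v x j i
        = (S x w i j - S0 x i j) * pd2 d v x j i + S0 x i j * pd2 d v x j i :=
      fun i j => by ring
    simp_rw [hsplit, Finset.sum_add_distrib]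
    ring
  have hFmeas : ∀ x, Measurable (F x) := by
    intro x
    refine Measurable.const_mul ?_ _
    refine Measurable.add (Measurable.add (hmr x) ?_) ?_
    · exact Finset.measurable_sum _ fun i _ => (hmb x i).mul_const _
    · exact Measurable.const_mul (Finset.measurable_sum _ fun i _ =>
        Finset.measurable_sum _ fun j _ => ((hmS x i j).sub measurable_const).mul_const _) _
  set P : ℝ := 1 + A₁ * (s + ε₀) with hP
  set Q : ℝ := 1 + A₁ * (t1 + ε₁ + t2 * ε₀) with hQ
  have hP1 : 1 ≤ P := by
    have := mul_nonneg hA0.le (add_pos hs0 hε₀).le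
    rw [hP]; linarith
  have hQ1 : 1 ≤ Q := by
    have h1 := mul_pos ht20 hε₀
    have := mul_nonneg hA0.le (by linarith : (0:ℝ) ≤ t1 + ε₁ + t2 * ε₀)
    rw [hQ]; linarith
  have hQ0 : 0 ≤ Q := by linarith
  set B : ℝ := c1 * P with hB
  have hB0 : 0 ≤ B := by rw [hB]; exact mul_nonneg hc1pos.le (by linarith)
  -- uniform bound on F
  have hFb : ∀ x, ∀ w ∈ U, |F x w| ≤ B := by
    intro x w hw
    have h1 : |r x w| ≤ C₀ := hrB w hw x
    have h2 : |∑ i, b x w i * pd1 d v x i| ≤ d * (C₀ * (A₁ * s)) :=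
      sumAbsLe _ _ fun i => by
        rw [abs_mul]
        exact mul_le_mul (hbB w hw x i) (hp1 x i) (abs_nonneg _) h0C.le
    have h3 : |∑ i, ∑ j, (S x w i j - S0 x i j) * pd2 d v x j i|
        ≤ d * ((d:ℝ) * (ε₀ * A₁)) :=
      sumAbsLe _ _ fun i => sumAbsLe _ _ fun j => by
        rw [abs_mul]
        exact mul_le_mul (hM0 w hw x i j) (hp2 x j i) (abs_nonneg _) hε₀.le
    have h4 : |F x w| ≤ (1/lam) * (C₀ + (d:ℝ) * (C₀ * (A₁ * s))
        + (1/2) * ((d:ℝ) * ((d:ℝ) * (ε₀ * A₁)))) := by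
      simp only [hF]
      rw [abs_mul, abs_of_pos (by positivity : (0:ℝ) < 1/lam)]
      refine mul_le_mul_of_nonneg_left ?_ (by positivity)
      refine (abs_add_three _ _ _).trans ?_
      rw [abs_mul, abs_of_pos (by norm_num : (0:ℝ) < 1/2)]
      have := mul_le_mul_of_nonneg_left h3 (by norm_num : (0:ℝ) ≤ 1/2)
      linarith
    have e1 : (0:ℝ) ≤ A₁ * s := mul_nonneg hA0.le hs0.le
    have e2 : (0:ℝ) ≤ A₁ * ε₀ := mul_nonneg hA0.le hε₀.le
    have hdC : (0:ℝ) ≤ (d:ℝ) * C₀ := mul_nonneg hd0 h0C.le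
    have hd2 : (0:ℝ) ≤ (d:ℝ)^2 := sq_nonneg _
    have hT : C₀ + (d:ℝ) * (C₀ * (A₁ * s)) + (1/2) * ((d:ℝ) * ((d:ℝ) * (ε₀ * A₁)))
        ≤ (C₀ * (1 + 2 * d) + (d:ℝ)^2) * P := by
      have k1 : (d:ℝ) * C₀ * (A₁ * s) ≤ (C₀ * (1 + 2 * d) + (d:ℝ)^2) * (A₁ * s) :=
        mul_le_mul_of_nonneg_right (by linarith) e1
      have k2 : ((1/2) * (d:ℝ)^2) * (A₁ * ε₀) ≤ (C₀ * (1 + 2 * d) + (d:ℝ)^2) * (A₁ * ε₀) :=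
        mul_le_mul_of_nonneg_right (by linarith) e2
      calc C₀ + (d:ℝ) * (C₀ * (A₁ * s)) + (1/2) * ((d:ℝ) * ((d:ℝ) * (ε₀ * A₁)))
          = C₀ + (d:ℝ) * C₀ * (A₁ * s) + ((1/2) * (d:ℝ)^2) * (A₁ * ε₀) := by ring
        _ ≤ (C₀ * (1 + 2 * d) + (d:ℝ)^2) + (C₀ * (1 + 2 * d) + (d:ℝ)^2) * (A₁ * s)
              + (C₀ * (1 + 2 * d) + (d:ℝ)^2) * (A₁ * ε₀) :=
            add_le_add (add_le_add (by linarith) k1) k2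
        _ = (C₀ * (1 + 2 * d) + (d:ℝ)^2) * P := by rw [hP]; ring
    calc |F x w| ≤ (1/lam) * (C₀ + (d:ℝ) * (C₀ * (A₁ * s))
          + (1/2) * ((d:ℝ) * ((d:ℝ) * (ε₀ * A₁)))) := h4
      _ ≤ (1/lam) * ((C₀ * (1 + 2 * d) + (d:ℝ)^2) * P) :=
          mul_le_mul_of_nonneg_left hT (by positivity)
      _ = ((C₀ * (1 + 2 * d) + (d:ℝ)^2) / lam) * P := by ring
      _ ≤ c1 * P := by rw [hc1def]; linarith [hP1]
  -- Hölder bound on F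
  have hFH : ∀ x y, dist x y ≤ 1 → ∀ w ∈ U,
      |F x w - F y w| ≤ c1 * Q * dist x y ^ α := by
    intro x y hxy w hw
    have hdα0 : (0:ℝ) ≤ dist x y ^ α := Real.rpow_nonneg dist_nonneg _
    have h1 : |r x w - r y w| ≤ C₀ * dist x y ^ α := hrH w hw x y hxy
    have h2 : |∑ i, b x w i * pd1 d v x i - ∑ i, b y w i * pd1 d v y i|
        ≤ d * ((C₀ * (A₁ * s) + C₀ * (A₁ * t1)) * dist x y ^ α) := by
      rw [← Finset.sum_sub_distrib]
      refine sumAbsLe _ _ fun i => ?_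
      have e : b x w i * pd1 d v x i - b y w i * pd1 d v y i
          = (b x w i - b y w i) * pd1 d v x i + b y w i * (pd1 d v x i - pd1 d v y i) := by
        ring
      rw [e]
      refine (abs_add_le _ _).trans ?_
      rw [abs_mul, abs_mul]
      have u1 := mul_le_mul (hbH w hw x y hxy i) (hp1 x i) (abs_nonneg _) (mul_nonneg h0C.le (Real.rpow_nonneg dist_nonneg _))
      have u2 := mul_le_mul (hbB w hw y i) (hp1d x y hxy i) (abs_nonneg _) h0C.le
      calc _ ≤ C₀ * dist x y ^ α * (A₁ * s) + C₀ * (A₁ * t1 * dist x y ^ α) :=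
            add_le_add u1 u2
        _ = (C₀ * (A₁ * s) + C₀ * (A₁ * t1)) * dist x y ^ α := by ring
    have h3 : |∑ i, ∑ j, (S x w i j - S0 x i j) * pd2 d v x j i
          - ∑ i, ∑ j, (S y w i j - S0 y i j) * pd2 d v y j i|
        ≤ d * ((d:ℝ) * ((ε₁ * A₁ + ε₀ * (A₁ * t2)) * dist x y ^ α)) := by
      rw [← Finset.sum_sub_distrib]
      refine sumAbsLe _ _ fun i => ?_
      rw [← Finset.sum_sub_distrib]
      refine sumAbsLe _ _ fun j => ?_
      have e : (S x w i j - S0 x i j) * pd2 d v x j i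
            - (S y w i j - S0 y i j) * pd2 d v y j i
          = ((S x w i j - S0 x i j) - (S y w i j - S0 y i j)) * pd2 d v x j i
            + (S y w i j - S0 y i j) * (pd2 d v x j i - pd2 d v y j i) := by ring
      rw [e]
      refine (abs_add_le _ _).trans ?_
      rw [abs_mul, abs_mul]
      have u1 := mul_le_mul (hM1 w hw x y hxy i j) (hp2 x j i) (abs_nonneg _) (mul_nonneg hε₁.le (Real.rpow_nonneg dist_nonneg _))
      have u2 := mul_le_mul (hM0 w hw y i j) (hp2d x y hxy j i) (abs_nonneg _) hε₀.le
      calc _ ≤ ε₁ * dist x y ^ α * A₁ + ε₀ * (A₁ * t2 * dist x y ^ α) := add_le_add u1 u2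
        _ = (ε₁ * A₁ + ε₀ * (A₁ * t2)) * dist x y ^ α := by ring
    have h4 : |F x w - F y w| ≤ (1/lam) * ((C₀ + (d:ℝ) * (C₀ * (A₁ * s) + C₀ * (A₁ * t1))
        + (1/2) * ((d:ℝ) * ((d:ℝ) * (ε₁ * A₁ + ε₀ * (A₁ * t2))))) * dist x y ^ α) := by
      have e : F x w - F y w = (1/lam) * ((r x w - r y w)
          + (∑ i, b x w i * pd1 d v x i - ∑ i, b y w i * pd1 d v y i)
          + (1/2) * (∑ i, ∑ j, (S x w i j - S0 x i j) * pd2 d v x j i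
              - ∑ i, ∑ j, (S y w i j - S0 y i j) * pd2 d v y j i)) := by
        simp only [hF]; ring
      rw [e, abs_mul, abs_of_pos (by positivity : (0:ℝ) < 1/lam)]
      refine mul_le_mul_of_nonneg_left ?_ (by positivity)
      refine (abs_add_three _ _ _).trans ?_
      rw [abs_mul, abs_of_pos (by norm_num : (0:ℝ) < 1/2)]
      have := mul_le_mul_of_nonneg_left h3 (by norm_num : (0:ℝ) ≤ 1/2)
      linarith
    have ha : (0:ℝ) ≤ A₁ * t1 := mul_nonneg hA0.le ht10.le
    have hb' : (0:ℝ) ≤ A₁ * ε₁ := mul_nonneg hA0.le hε₁.le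
    have hc' : (0:ℝ) ≤ A₁ * (t2 * ε₀) := mul_nonneg hA0.le (mul_nonneg ht20.le hε₀.le)
    have he : A₁ * s ≤ A₁ * t1 := mul_le_mul_of_nonneg_left hst hA0.le
    have hdα0' : (0:ℝ) ≤ dist x y ^ α := Real.rpow_nonneg dist_nonneg _
    have hdC : (0:ℝ) ≤ (d:ℝ) * C₀ := mul_nonneg hd0 h0C.le
    have hd2 : (0:ℝ) ≤ (d:ℝ)^2 := sq_nonneg _
    have hT : C₀ + (d:ℝ) * (C₀ * (A₁ * s) + C₀ * (A₁ * t1))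
        + (1/2) * ((d:ℝ) * ((d:ℝ) * (ε₁ * A₁ + ε₀ * (A₁ * t2))))
        ≤ (C₀ * (1 + 2 * d) + (d:ℝ)^2) * Q := by
      have k0 : ((d:ℝ) * C₀) * (A₁ * s) ≤ ((d:ℝ) * C₀) * (A₁ * t1) :=
        mul_le_mul_of_nonneg_left he hdC
      have k1 : (2 * ((d:ℝ) * C₀)) * (A₁ * t1) ≤ (C₀ * (1 + 2 * d) + (d:ℝ)^2) * (A₁ * t1) :=
        mul_le_mul_of_nonneg_right (by linarith) ha
      have k2 : ((1/2) * (d:ℝ)^2) * (A₁ * ε₁) ≤ (C₀ * (1 + 2 * d) + (d:ℝ)^2) * (A₁ * ε₁) :=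
        mul_le_mul_of_nonneg_right (by linarith) hb'
      have k3 : ((1/2) * (d:ℝ)^2) * (A₁ * (t2 * ε₀))
          ≤ (C₀ * (1 + 2 * d) + (d:ℝ)^2) * (A₁ * (t2 * ε₀)) :=
        mul_le_mul_of_nonneg_right (by linarith) hc'
      calc C₀ + (d:ℝ) * (C₀ * (A₁ * s) + C₀ * (A₁ * t1))
            + (1/2) * ((d:ℝ) * ((d:ℝ) * (ε₁ * A₁ + ε₀ * (A₁ * t2))))
          = C₀ + (((d:ℝ) * C₀) * (A₁ * s) + ((d:ℝ) * C₀) * (A₁ * t1))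
              + (((1/2) * (d:ℝ)^2) * (A₁ * ε₁) + ((1/2) * (d:ℝ)^2) * (A₁ * (t2 * ε₀))) := by
            ring
        _ ≤ C₀ + (2 * ((d:ℝ) * C₀)) * (A₁ * t1)
              + (((1/2) * (d:ℝ)^2) * (A₁ * ε₁) + ((1/2) * (d:ℝ)^2) * (A₁ * (t2 * ε₀))) := by
            linarith
        _ ≤ (C₀ * (1 + 2 * d) + (d:ℝ)^2) + (C₀ * (1 + 2 * d) + (d:ℝ)^2) * (A₁ * t1)
              + ((C₀ * (1 + 2 * d) + (d:ℝ)^2) * (A₁ * ε₁)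
                + (C₀ * (1 + 2 * d) + (d:ℝ)^2) * (A₁ * (t2 * ε₀))) :=
            add_le_add (add_le_add (by linarith) k1) (add_le_add k2 k3)
        _ = (C₀ * (1 + 2 * d) + (d:ℝ)^2) * Q := by rw [hQ]; ring
    calc |F x w - F y w| ≤ (1/lam) * ((C₀ + (d:ℝ) * (C₀ * (A₁ * s) + C₀ * (A₁ * t1))
          + (1/2) * ((d:ℝ) * ((d:ℝ) * (ε₁ * A₁ + ε₀ * (A₁ * t2))))) * dist x y ^ α) := h4
      _ ≤ (1/lam) * (((C₀ * (1 + 2 * d) + (d:ℝ)^2) * Q) * dist x y ^ α) := by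
          refine mul_le_mul_of_nonneg_left (mul_le_mul_of_nonneg_right hT hdα0')
            (by positivity)
      _ = (((C₀ * (1 + 2 * d) + (d:ℝ)^2) / lam) * Q) * dist x y ^ α := by ring
      _ ≤ c1 * Q * dist x y ^ α := by
          have hcc : (C₀ * (1 + 2 * d) + (d:ℝ)^2) / lam ≤ c1 := by rw [hc1def]; linarith
          exact mul_le_mul_of_nonneg_right (mul_le_mul_of_nonneg_right hcc hQ0) hdα0' 
  haveI hfin : IsFiniteMeasure (volume.restrict U) :=
    ⟨by rw [Measure.restrict_apply_univ, hvol]; exact ENNReal.one_lt_top⟩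
  have hIx : ∀ x, IntegrableOn (fun w => Real.exp (F x w)) U volume ∧
      Real.exp (-B) ≤ (∫ w in U, Real.exp (F x w)) ∧
      (∫ w in U, Real.exp (F x w)) ≤ Real.exp B :=
    fun x => gibbsInt hU hvol (hFmeas x) (hFb x)
  have hπ : ∀ x w, gibbsPolicy d l lam U r b S v x w
      = Real.exp (F x w) / ∫ w' in U, Real.exp (F x w') := by
    intro x w
    simp only [gibbsPolicy, gibbsDensity]
    simp_rw [hEFG, Real.exp_add]
    rw [integral_mul_const]
    rw [mul_comm (Real.exp (F x w)) (Real.exp (G x)),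
      mul_comm (∫ w' in U, Real.exp (F x w')) (Real.exp (G x)),
      mul_div_mul_left _ _ (Real.exp_ne_zero _)]
  intro u hu
  constructor
  · -- sup bound
    intro x
    obtain ⟨hint, hlow, hup⟩ := hIx x
    have hIpos : 0 < ∫ w' in U, Real.exp (F x w') := lt_of_lt_of_le (Real.exp_pos _) hlow
    rw [hπ, abs_of_nonneg (div_nonneg (Real.exp_pos _).le hIpos.le)]
    have h1 : Real.exp (F x u) / (∫ w' in U, Real.exp (F x w'))
        ≤ Real.exp B / Real.exp (-B) :=
      div_le_div₀ (Real.exp_pos B).le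
        (Real.exp_le_exp.2 ((le_abs_self _).trans (hFb x u hu))) (Real.exp_pos _) hlow
    refine h1.trans ?_
    rw [← Real.exp_sub]
    refine Real.exp_le_exp.2 ?_
    rw [hB]
    have hx : (0:ℝ) ≤ (4 * c1 + 1) * P := mul_nonneg (by linarith) (by linarith)
    linarith
  · -- Hölder bound
    intro x y hxy
    obtain ⟨hintx, hlowx, hupx⟩ := hIx x
    obtain ⟨hinty, hlowy, hupy⟩ := hIx y
    set Ix := ∫ w' in U, Real.exp (F x w') with hIxdef
    set Iy := ∫ w' in U, Real.exp (F y w') with hIydef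
    have hIxpos : 0 < Ix := lt_of_lt_of_le (Real.exp_pos _) hlowx
    have hIypos : 0 < Iy := lt_of_lt_of_le (Real.exp_pos _) hlowy
    have hdα0 : (0:ℝ) ≤ dist x y ^ α := Real.rpow_nonneg dist_nonneg _
    set K := c1 * Q * dist x y ^ α with hK
    have hK0 : (0:ℝ) ≤ K := mul_nonneg (mul_nonneg hc1pos.le hQ0) hdα0
    have hnum : |Real.exp (F x u) - Real.exp (F y u)| ≤ Real.exp B * K :=
      le_trans (expDiffLe (hFb x u hu) (hFb y u hu))
        (mul_le_mul_of_nonneg_left (hFH x y hxy u hu) (Real.exp_pos B).le)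
    have hIdiff : |Iy - Ix| ≤ Real.exp B * K := by
      rw [hIydef, hIxdef, ← integral_sub hinty hintx]
      rw [← Real.norm_eq_abs]
      refine le_trans (norm_integral_le_integral_norm _) ?_
      have hb1 : ∫ w in U, ‖Real.exp (F y w) - Real.exp (F x w)‖
          ≤ ∫ _w in U, Real.exp B * K := by
        refine setIntegral_mono_on ?_ (integrable_const _) hU ?_
        · exact (hinty.sub hintx).norm
        · intro w hw
          rw [Real.norm_eq_abs]
          refine le_trans (expDiffLe (hFb y w hw) (hFb x w hw)) ?_
          refine mul_le_mul_of_nonneg_left ?_ (Real.exp_pos B).le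
          rw [abs_sub_comm]
          exact hFH x y hxy w hw
      refine hb1.trans ?_
      rw [setIntegral_const, measureReal_def, hvol]
      simp
    have hid : gibbsPolicy d l lam U r b S v x u - gibbsPolicy d l lam U r b S v y u
        = (Real.exp (F x u) - Real.exp (F y u)) / Ix
          + Real.exp (F y u) * (Iy - Ix) / (Ix * Iy) := by
      rw [hπ, hπ, ← hIxdef, ← hIydef]
      field_simp
      ring
    rw [hid]
    have t1bnd : |(Real.exp (F x u) - Real.exp (F y u)) / Ix|
        ≤ (Real.exp B * K) / Real.exp (-B) := by
      rw [abs_div, abs_of_pos hIxpos]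
      exact div_le_div₀ (mul_nonneg (Real.exp_pos B).le hK0) hnum (Real.exp_pos _) hlowx
    have t2bnd : |Real.exp (F y u) * (Iy - Ix) / (Ix * Iy)|
        ≤ (Real.exp B * (Real.exp B * K)) / (Real.exp (-B) * Real.exp (-B)) := by
      rw [abs_div, abs_of_pos (mul_pos hIxpos hIypos), abs_mul,
        abs_of_pos (Real.exp_pos _)]
      refine div_le_div₀
        (mul_nonneg (Real.exp_pos B).le (mul_nonneg (Real.exp_pos B).le hK0))
        (mul_le_mul (Real.exp_le_exp.2 ((le_abs_self _).trans (hFb y u hu))) hIdiff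
          (abs_nonneg _) (Real.exp_pos B).le)
        (mul_pos (Real.exp_pos _) (Real.exp_pos _))
        (mul_le_mul hlowx hlowy (Real.exp_pos _).le hIxpos.le)
    refine le_trans (abs_add_le _ _) ?_
    refine le_trans (add_le_add t1bnd t2bnd) ?_
    have hEeq : (Real.exp B * K) / Real.exp (-B)
        + (Real.exp B * (Real.exp B * K)) / (Real.exp (-B) * Real.exp (-B))
        = (Real.exp B ^ 2 + Real.exp B ^ 4) * K := by
      rw [Real.exp_neg]
      field_simp
    rw [hEeq]
    have hE1le : 1 ≤ Real.exp B := Real.one_le_exp hB0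
    have h3 : Real.exp B ^ 4 = Real.exp (4 * B) := by
      rw [← Real.exp_nat_mul]; norm_num
    have h4 : 2 * c1 ≤ Real.exp (2 * c1) := by linarith [Real.add_one_le_exp (2 * c1)]
    have hEE : Real.exp B ^ 2 ≤ Real.exp B ^ 4 :=
      pow_le_pow_right₀ hE1le (by norm_num)
    calc (Real.exp B ^ 2 + Real.exp B ^ 4) * K ≤ (2 * Real.exp B ^ 4) * K :=
          mul_le_mul_of_nonneg_right (by linarith) hK0
      _ = (2 * c1) * Real.exp (4 * B) * (Q * dist x y ^ α) := by rw [← h3, hK]; ring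
      _ ≤ Real.exp (2 * c1) * Real.exp (4 * B) * (Q * dist x y ^ α) :=
          mul_le_mul_of_nonneg_right (mul_le_mul_of_nonneg_right h4 (Real.exp_pos _).le)
            (mul_nonneg hQ0 hdα0)
      _ = Real.exp (2 * c1 + 4 * B) * (Q * dist x y ^ α) := by rw [← Real.exp_add]
      _ ≤ Real.exp ((6 * c1 + 1) * P) * (Q * dist x y ^ α) := by
          refine mul_le_mul_of_nonneg_right (Real.exp_le_exp.2 ?_) (mul_nonneg hQ0 hdα0)
          rw [hB]
          linarith [mul_le_mul_of_nonneg_left hP1 hc1pos.le, hP1]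
      _ = Q * Real.exp ((6 * c1 + 1) * P) * dist x y ^ α := by ring
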